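/- arXiv:1002.2098 — 2 statements merged into one kernel-verified Lean document; each statement's English description precedes it below -/
import Mathlib

section
/- For every set S of positive integers, D(S) ≥ d(S), where d(S) is the lower asymptotic density of S and D(S) = limsup_{T→∞} (1/log T) ∫_{1/T}^1 f_S(t) dt. -/
open MeasureTheory Filter

/-- `f_S(t) = ∑_{n ∈ S} e^{-nt}`. -/
noncomputable def fS (S : Set ℕ) (t : ℝ) : ℝ := ∑' n : S, Real.exp (-(n : ℝ) * t)

/-- Lower asymptotic density of a set of positive integers. -/
noncomputable def lowerDensity (S : Set ℕ) : ℝ :=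
  liminf (fun n : ℕ => ((S ∩ Set.Icc 1 n).ncard : ℝ) / n) atTop

/-- `D(S) = limsup_{T→∞} (1/log T) ∫_{1/T}^1 f_S(t) dt`. -/
noncomputable def DD (S : Set ℕ) : ℝ :=
  limsup (fun T : ℝ => (1 / Real.log T) * ∫ t in (1 / T : ℝ)..1, fS S t) atTop

/-!
Write `r = e^{-t}` and `A(m) = #(S ∩ [0, m])`. The Cauchy product with `∑ r^m` gives
`f_S(t) = (1 - r) ∑ A(m) r^m`, so a linear lower bound `A(m) ≥ a m - c` yields
`f_S(t) ≥ a r / (1 - r) - c ≥ a (1/t - 1) - c`, whose integral over `[1/T, 1]` is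
`a log T - O(1)`. The bound `f_S(t) ≤ 1 / (1 - r) ≤ 1/t + 1` keeps the averages bounded above,
which is needed for the `limsup` in `DD` to be the true one rather than the junk value `0`.
-/

open Real Set Topology

theorem hasSum_sum_range_mul_geometric {𝕜 : Type*} [NormedField 𝕜] [CompleteSpace 𝕜]
    {b : ℕ → 𝕜} {r : 𝕜} (hr : ‖r‖ < 1) (hb : Summable fun n => ‖b n * r ^ n‖) :
    HasSum (fun m => (∑ k ∈ Finset.range (m + 1), b k) * r ^ m)
      ((∑' n, b n * r ^ n) * (1 - r)⁻¹) := by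
  rw [← tsum_geometric_of_norm_lt_one hr]
  convert hasSum_sum_range_mul_of_summable_norm hb
    (summable_norm_geometric_of_norm_lt_one hr) using 2 with m
  rw [Finset.sum_mul]
  refine Finset.sum_congr rfl fun k hk => ?_
  rw [mul_assoc, pow_mul_pow_sub r (Finset.mem_range_succ_iff.1 hk)]

lemma fS_eq_tsum (S : Set ℕ) (t : ℝ) :
    fS S t = ∑' n, S.indicator 1 n * rexp (-t) ^ n := by
  calc fS S t = ∑' n : S, rexp (-t) ^ (n : ℕ) :=
        tsum_congr fun n => by rw [← Real.exp_nat_mul]; ring_nf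
    _ = ∑' n, S.indicator (fun n => rexp (-t) ^ n) n := tsum_subtype S _
    _ = _ := tsum_congr fun n => by by_cases h : n ∈ S <;> simp [h]

lemma summable_norm_indicator_one_mul_pow (S : Set ℕ) {r : ℝ} (hr0 : 0 ≤ r) (hr1 : r < 1) :
    Summable fun n => ‖S.indicator 1 n * r ^ n‖ := by
  refine (summable_geometric_of_lt_one hr0 hr1).of_nonneg_of_le (fun n => norm_nonneg _)
    fun n => ?_
  rw [norm_mul, norm_pow, Real.norm_of_nonneg hr0]
  exact mul_le_of_le_one_left (by positivity) (by by_cases h : n ∈ S <;> simp [h])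

lemma summable_indicator_one_mul_exp_neg_pow (S : Set ℕ) {t : ℝ} (ht : 0 < t) :
    Summable fun n => S.indicator 1 n * rexp (-t) ^ n :=
  (summable_norm_indicator_one_mul_pow S (exp_pos _).le
    (exp_lt_one_iff.2 (neg_neg_of_pos ht))).of_norm

lemma ncard_inter_Icc_le_sum_indicator (S : Set ℕ) (m : ℕ) :
    ((S ∩ Icc 1 m).ncard : ℝ) ≤ ∑ k ∈ Finset.range (m + 1), S.indicator 1 k := by
  classical
  have hsub : S ∩ Icc 1 m ⊆ ↑((Finset.range (m + 1)).filter (· ∈ S)) := fun n hn => by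
    simpa using ⟨hn.2.2, hn.1⟩
  simp only [Set.indicator_apply, Pi.one_apply, Finset.sum_boole]
  exact_mod_cast (ncard_le_ncard hsub).trans (ncard_coe_finset _).le

lemma exp_neg_div_one_sub_exp_neg_le {t : ℝ} (ht : 0 < t) :
    rexp (-t) / (1 - rexp (-t)) ≤ t⁻¹ := by
  have hr : rexp (-t) < 1 := exp_lt_one_iff.2 (by linarith)
  have hinv : rexp (-t) * rexp t = 1 := by rw [← exp_add]; simp
  rw [div_le_iff₀ (by linarith), inv_mul_eq_div, le_div_iff₀ ht]
  nlinarith [add_one_le_exp t, exp_pos (-t)]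

lemma inv_sub_one_le_exp_neg_div_one_sub_exp_neg {t : ℝ} (ht : 0 < t) :
    t⁻¹ - 1 ≤ rexp (-t) / (1 - rexp (-t)) := by
  have hr : rexp (-t) < 1 := exp_lt_one_iff.2 (by linarith)
  have hgap : t⁻¹ * (1 - t - rexp (-t)) ≤ 0 :=
    mul_nonpos_of_nonneg_of_nonpos (inv_nonneg.2 ht.le) (by linarith [add_one_le_exp (-t)])
  rw [le_div_iff₀ (by linarith)]
  have hsplit : (t⁻¹ - 1) * (1 - rexp (-t)) = rexp (-t) + t⁻¹ * (1 - t - rexp (-t)) := by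
    field_simp; ring
  linarith

lemma indicator_one_mul_le (S : Set ℕ) {x : ℝ} (hx : 0 ≤ x) (n : ℕ) :
    S.indicator 1 n * x ≤ x :=
  mul_le_of_le_one_left hx (indicator_le_self' (fun _ _ => zero_le_one) n)

lemma fS_le (S : Set ℕ) {t : ℝ} (ht : 0 < t) : fS S t ≤ t⁻¹ + 1 := by
  set r := rexp (-t)
  have hr0 : 0 ≤ r := (exp_pos _).le
  have hr1 : r < 1 := exp_lt_one_iff.2 (by linarith)
  calc fS S t = ∑' n, S.indicator 1 n * r ^ n := fS_eq_tsum S t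
    _ ≤ ∑' n : ℕ, r ^ n :=
        (summable_indicator_one_mul_exp_neg_pow S ht).tsum_le_tsum
          (fun n => indicator_one_mul_le S (pow_nonneg hr0 n) n)
          (summable_geometric_of_lt_one hr0 hr1)
    _ = r / (1 - r) + 1 := by
        rw [tsum_geometric_of_lt_one hr0 hr1]; field_simp [(sub_pos.2 hr1).ne']; ring
    _ ≤ t⁻¹ + 1 := by gcongr; exact exp_neg_div_one_sub_exp_neg_le ht

lemma le_fS (S : Set ℕ) {a c t : ℝ} (ha : 0 ≤ a)
    (hcount : ∀ m : ℕ, a * m - c ≤ (S ∩ Icc 1 m).ncard) (ht : 0 < t) :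
    a * (t⁻¹ - 1) - c ≤ fS S t := by
  set r := rexp (-t)
  have hr0 : 0 ≤ r := (exp_pos _).le
  have hr1 : r < 1 := exp_lt_one_iff.2 (by linarith)
  have hr : ‖r‖ < 1 := by rwa [Real.norm_of_nonneg hr0]
  have hcounting :=
    hasSum_sum_range_mul_geometric hr (summable_norm_indicator_one_mul_pow S hr0 hr1)
  have hlinear : HasSum (fun m : ℕ => (a * m - c) * r ^ m)
      (a * (r / (1 - r) ^ 2) - c * (1 - r)⁻¹) := by
    simp_rw [sub_mul, mul_assoc]
    exact ((hasSum_coe_mul_geometric_of_norm_lt_one hr).mul_left a).sub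
      ((hasSum_geometric_of_lt_one hr0 hr1).mul_left c)
  have hcmp := hasSum_le (fun m => mul_le_mul_of_nonneg_right
    ((hcount m).trans (ncard_inter_Icc_le_sum_indicator S m)) (pow_nonneg hr0 m))
    hlinear hcounting
  rw [le_mul_inv_iff₀ (sub_pos.2 hr1)] at hcmp
  calc a * (t⁻¹ - 1) - c ≤ a * (r / (1 - r)) - c := by
        gcongr; exact inv_sub_one_le_exp_neg_div_one_sub_exp_neg ht
    _ = (a * (r / (1 - r) ^ 2) - c * (1 - r)⁻¹) * (1 - r) := by
        field_simp [(sub_pos.2 hr1).ne']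
    _ ≤ fS S t := by rwa [fS_eq_tsum]

lemma antitoneOn_fS (S : Set ℕ) : AntitoneOn (fS S) (Ioi 0) := by
  intro x (hx : 0 < x) y (hy : 0 < y) hxy
  simp only [fS_eq_tsum]
  refine (summable_indicator_one_mul_exp_neg_pow S hy).tsum_le_tsum (fun n => ?_)
    (summable_indicator_one_mul_exp_neg_pow S hx)
  exact mul_le_mul_of_nonneg_left (pow_le_pow_left₀ (exp_pos _).le
    (exp_le_exp.2 (neg_le_neg hxy)) n) (indicator_nonneg (fun _ _ => zero_le_one) n)

lemma intervalIntegrable_fS (S : Set ℕ) {a b : ℝ} (ha : 0 < a) (hb : 0 < b) :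
    IntervalIntegrable (fS S) volume a b :=
  ((antitoneOn_fS S).mono fun _ hx => (lt_min ha hb).trans_le hx.1).intervalIntegrable

lemma intervalIntegrable_inv_mul_add_const {T : ℝ} (hT : 0 < T) (α β : ℝ) :
    IntervalIntegrable (fun t => α * t⁻¹ + β) volume (1 / T) 1 := by
  have hne : (0 : ℝ) ∉ uIcc (1 / T) 1 := notMem_uIcc_of_lt (by positivity) one_pos
  exact ((intervalIntegral.intervalIntegrable_inv (fun x hx => ne_of_mem_of_not_mem hx hne)
    continuousOn_id).const_mul α).add intervalIntegrable_const

lemma integral_inv_mul_add_const {T : ℝ} (hT : 0 < T) (α β : ℝ) :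
    ∫ t in (1 / T)..1, (α * t⁻¹ + β) = α * log T + β * (1 - 1 / T) := by
  have hne : (0 : ℝ) ∉ uIcc (1 / T) 1 := notMem_uIcc_of_lt (by positivity) one_pos
  rw [intervalIntegral.integral_add ((intervalIntegral.intervalIntegrable_inv
      (fun x hx => ne_of_mem_of_not_mem hx hne) continuousOn_id).const_mul α)
      intervalIntegrable_const, intervalIntegral.integral_const_mul, integral_inv hne,
    intervalIntegral.integral_const, smul_eq_mul, one_div_one_div]
  ring

lemma tendsto_inv_log_mul_log_add (α β : ℝ) :
    Tendsto (fun T => 1 / log T * (α * log T + β * (1 - 1 / T))) atTop (𝓝 α) := by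
  have hlim : Tendsto (fun T => α + β * (1 - 1 / T) * (log T)⁻¹) atTop
      (𝓝 (α + β * (1 - 0) * 0)) :=
    tendsto_const_nhds.add (((tendsto_const_nhds.sub
      (tendsto_const_nhds.div_atTop tendsto_id)).const_mul β).mul
        (tendsto_inv_atTop_zero.comp tendsto_log_atTop))
  rw [mul_zero, add_zero] at hlim
  refine hlim.congr' ?_
  filter_upwards [eventually_gt_atTop 1] with T hT
  field_simp [(log_pos hT).ne']

lemma integral_fS_le (S : Set ℕ) {T : ℝ} (hT : 1 ≤ T) :
    ∫ t in (1 / T)..1, fS S t ≤ 1 * log T + 1 * (1 - 1 / T) := by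
  have hT0 : 0 < 1 / T := by positivity
  rw [← integral_inv_mul_add_const (by positivity) 1 1]
  refine intervalIntegral.integral_mono_on (div_le_one_of_le₀ hT (by positivity))
    (intervalIntegrable_fS S hT0 one_pos)
    (intervalIntegrable_inv_mul_add_const (by positivity) 1 1) fun t ht => ?_
  linarith [fS_le S (hT0.trans_le ht.1)]

lemma le_integral_fS (S : Set ℕ) {a c T : ℝ} (ha : 0 ≤ a)
    (hcount : ∀ m : ℕ, a * m - c ≤ (S ∩ Icc 1 m).ncard) (hT : 1 ≤ T) :
    a * log T + -(a + c) * (1 - 1 / T) ≤ ∫ t in (1 / T)..1, fS S t := by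
  have hT0 : 0 < 1 / T := by positivity
  rw [← integral_inv_mul_add_const (by positivity)]
  refine intervalIntegral.integral_mono_on (div_le_one_of_le₀ hT (by positivity))
    (intervalIntegrable_inv_mul_add_const (by positivity) _ _)
    (intervalIntegrable_fS S hT0 one_pos) fun t ht => ?_
  linarith [le_fS S ha hcount (hT0.trans_le ht.1)]

lemma le_limsup_of_tendsto_of_eventually_le {ι : Type*} {l : Filter ι} [l.NeBot]
    {f g h : ι → ℝ} {a b : ℝ} (hg : Tendsto g l (𝓝 a)) (hh : Tendsto h l (𝓝 b))
    (hgf : g ≤ᶠ[l] f) (hfh : f ≤ᶠ[l] h) : a ≤ limsup f l :=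
  hg.limsup_eq ▸
    limsup_le_limsup hgf hg.isCoboundedUnder_le (hh.isBoundedUnder_le.mono_le hfh)

lemma le_DD_of_eventually_le_integral (S : Set ℕ) {α β : ℝ}
    (h : ∀ᶠ T in atTop, α * log T + β * (1 - 1 / T) ≤ ∫ t in (1 / T)..1, fS S t) :
    α ≤ DD S := by
  refine le_limsup_of_tendsto_of_eventually_le (tendsto_inv_log_mul_log_add α β)
    (tendsto_inv_log_mul_log_add 1 1) ?_ ?_
  · filter_upwards [h, eventually_ge_atTop 1] with T hT hT1
    exact mul_le_mul_of_nonneg_left hT (one_div_nonneg.2 (log_nonneg hT1))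
  · filter_upwards [eventually_ge_atTop 1] with T hT1
    exact mul_le_mul_of_nonneg_left (integral_fS_le S hT1) (one_div_nonneg.2 (log_nonneg hT1))

lemma exists_forall_mul_sub_le_of_eventually_le {u : ℕ → ℝ} (hu : ∀ m, 0 ≤ u m) {a : ℝ}
    (ha : 0 ≤ a) (h : ∀ᶠ m in atTop, a * m ≤ u m) : ∃ c, ∀ m : ℕ, a * m - c ≤ u m := by
  obtain ⟨N, hN⟩ := eventually_atTop.1 h
  refine ⟨a * N, fun m => ?_⟩
  rcases le_total N m with hm | hm
  · linarith [hN m hm, mul_nonneg ha N.cast_nonneg]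
  · linarith [hu m, mul_le_mul_of_nonneg_left (Nat.cast_le.2 hm : (m : ℝ) ≤ N) ha]

lemma exists_linear_lower_bound_of_lt_lowerDensity {S : Set ℕ} {a' : ℝ}
    (h : a' < lowerDensity S) :
    ∃ a c : ℝ, a' ≤ a ∧ 0 ≤ a ∧ ∀ m : ℕ, a * m - c ≤ (S ∩ Icc 1 m).ncard := by
  have hev : ∀ᶠ m : ℕ in atTop, max a' 0 * m ≤ (S ∩ Icc 1 m).ncard := by
    rcases le_or_gt a' 0 with h0 | h0
    · simp [max_eq_right h0]
    · have hbdd : IsBoundedUnder (· ≥ ·) atTop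
          fun n : ℕ => ((S ∩ Icc 1 n).ncard : ℝ) / n :=
        isBoundedUnder_of ⟨0, fun n => by positivity⟩
      filter_upwards [eventually_lt_of_lt_liminf h hbdd, eventually_gt_atTop 0] with m hm hm0
      rw [max_eq_left h0.le]
      exact ((lt_div_iff₀ (Nat.cast_pos.2 hm0)).1 hm).le
  obtain ⟨c, hc⟩ := exists_forall_mul_sub_le_of_eventually_le (fun m => Nat.cast_nonneg _)
    (le_max_right a' 0) hev
  exact ⟨max a' 0, c, le_max_left _ _, le_max_right _ _, hc⟩

theorem DD_ge_lowerDensity_general (S : Set ℕ) :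
    lowerDensity S ≤ DD S := by
  refine le_of_forall_lt_imp_le_of_dense fun a' ha' => ?_
  obtain ⟨a, c, ha'a, ha, hcount⟩ := exists_linear_lower_bound_of_lt_lowerDensity ha'
  exact ha'a.trans <| le_DD_of_eventually_le_integral S <|
    (eventually_ge_atTop 1).mono fun T hT => le_integral_fS S ha hcount hT

theorem DD_ge_lowerDensity (S : Set ℕ) (hS : ∀ n ∈ S, 0 < n) :
    lowerDensity S ≤ DD S :=
  DD_ge_lowerDensity_general S
end

section
/- If a set S of positive integers satisfies |S ∩ [1,n]| > δn for all n ≥ N, then for all t > 0, f_S(t) ≥ δ·e^{-Nt}/(1 − e^{-t}). -/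
open Set
open scoped ENNReal

namespace ENNReal

theorem tsum_pow_Ici (X : ℝ≥0∞) (N : ℕ) : ∑' n : Ici N, X ^ (n : ℕ) = X ^ N * (1 - X)⁻¹ := by
  have hrange : range (N + ·) = Ici N := by
    ext n
    exact ⟨fun ⟨k, hk⟩ => hk ▸ Nat.le_add_right N k, Nat.le.dest⟩
  rw [← hrange, tsum_range (X ^ ·) (add_right_injective N)]
  simp_rw [pow_add, ENNReal.tsum_mul_left, ENNReal.tsum_geometric]

theorem ncard_inter_Iic_mul_pow (T : Set ℕ) (X : ℝ≥0∞) (m : ℕ) :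
    ((T ∩ Iic m).ncard : ℝ≥0∞) * X ^ m = ∑' n : T, (Ici (n : ℕ)).indicator (X ^ ·) m := by
  have hind : ∀ n, (Ici n).indicator (X ^ ·) m = (Iic m).indicator (fun _ => X ^ m) n := by
    intro n
    by_cases h : n ≤ m <;> simp [h]
  simp_rw [hind]
  rw [tsum_subtype T (fun n => (Iic m).indicator (fun _ => X ^ m) n), indicator_indicator,
    ← tsum_subtype, ENNReal.tsum_set_const, ← ((finite_Iic m).inter_of_right T).cast_ncard_eq,
    ENat.toENNReal_coe]

theorem tsum_ncard_inter_Iic_mul_pow (T : Set ℕ) (X : ℝ≥0∞) :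
    ∑' m, ((T ∩ Iic m).ncard : ℝ≥0∞) * X ^ m = (∑' n : T, X ^ (n : ℕ)) * (1 - X)⁻¹ := by
  simp_rw [ncard_inter_Iic_mul_pow]
  rw [ENNReal.tsum_comm, ← ENNReal.tsum_mul_right]
  refine tsum_congr fun n => ?_
  rw [← tsum_pow_Ici, tsum_subtype]

theorem mul_tsum_pow_le_tsum_pow {T U : Set ℕ} {c X : ℝ≥0∞} (hX : X < 1)
    (h : ∀ m, c * (U ∩ Iic m).ncard ≤ (T ∩ Iic m).ncard) :
    c * ∑' n : U, X ^ (n : ℕ) ≤ ∑' n : T, X ^ (n : ℕ) := by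
  have hinv_ne_zero : (1 - X)⁻¹ ≠ 0 := ENNReal.inv_ne_zero.2 (ENNReal.sub_ne_top one_ne_top)
  have hinv_ne_top : (1 - X)⁻¹ ≠ ∞ := ENNReal.inv_ne_top.2 (tsub_pos_of_lt hX).ne'
  rw [← ENNReal.mul_le_mul_iff_left hinv_ne_zero hinv_ne_top, mul_assoc,
    ← tsum_ncard_inter_Iic_mul_pow, ← tsum_ncard_inter_Iic_mul_pow, ← ENNReal.tsum_mul_left]
  refine ENNReal.tsum_le_tsum fun m => ?_
  rw [← mul_assoc]
  gcongr
  exact h m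

end ENNReal

theorem Real.exp_neg_natCast_mul (n : ℕ) (t : ℝ) : Real.exp (-(n : ℝ) * t) = Real.exp (-t) ^ n := by
  rw [← Real.exp_nat_mul, neg_mul, mul_neg]

theorem ofReal_fS (S : Set ℕ) {t : ℝ} (ht : 0 < t) :
    ENNReal.ofReal (fS S t) = ∑' n : S, ENNReal.ofReal (Real.exp (-t)) ^ (n : ℕ) := by
  have hsum : Summable fun n : ℕ => Real.exp (-t) ^ n :=
    summable_geometric_of_lt_one (Real.exp_nonneg _) (Real.exp_lt_one_iff.2 (neg_lt_zero.2 ht))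
  simp_rw [fS, Real.exp_neg_natCast_mul]
  rw [ENNReal.ofReal_tsum_of_nonneg (f := fun n : S => Real.exp (-t) ^ (n : ℕ))
    (fun n => by positivity) (hsum.subtype S)]
  simp_rw [ENNReal.ofReal_pow (Real.exp_nonneg _)]

theorem mul_ncard_Icc_le_ncard_inter_Iic {S : Set ℕ} {δ : ℝ} (hδ : 0 ≤ δ) {N : ℕ} (hN : 0 < N)
    (hS : ∀ n : ℕ, N ≤ n → δ * n < (S ∩ Icc 1 n).ncard) (m : ℕ) :
    δ * (Icc N m).ncard ≤ (S ∩ Iic m).ncard := by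
  rcases lt_or_ge m N with hm | hm
  · simp [Icc_eq_empty_of_lt hm]
  have hIcc : ((Icc N m).ncard : ℝ) ≤ m := by
    rw [ncard_Icc_nat]; exact_mod_cast (by omega : m + 1 - N ≤ m)
  have hsub : (S ∩ Icc 1 m).ncard ≤ (S ∩ Iic m).ncard :=
    ncard_le_ncard (inter_subset_inter_right S Icc_subset_Iic_self)
      ((finite_Iic m).inter_of_right S)
  calc δ * (Icc N m).ncard ≤ δ * m := by gcongr
    _ ≤ (S ∩ Icc 1 m).ncard := (hS m hm).le
    _ ≤ (S ∩ Iic m).ncard := by exact_mod_cast hsub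

theorem fS_lower_bound (S : Set ℕ) (δ : ℝ) (hδ : 0 < δ) (N : ℕ) (hN : 0 < N)
    (hS : ∀ n : ℕ, N ≤ n → δ * n < (S ∩ Set.Icc 1 n).ncard)
    (t : ℝ) (ht : 0 < t) :
    δ * Real.exp (-(N : ℝ) * t) / (1 - Real.exp (-t)) ≤ fS S t := by
  set x := Real.exp (-t)
  have hx1 : x < 1 := Real.exp_lt_one_iff.2 (neg_lt_zero.2 ht)
  have hcount : ∀ m, ENNReal.ofReal δ * (Ici N ∩ Iic m).ncard ≤ (S ∩ Iic m).ncard := fun m => by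
    rw [Ici_inter_Iic, ← ENNReal.ofReal_natCast, ← ENNReal.ofReal_natCast,
      ← ENNReal.ofReal_mul hδ.le]
    exact ENNReal.ofReal_le_ofReal (mul_ncard_Icc_le_ncard_inter_Iic hδ.le hN hS m)
  have key := ENNReal.mul_tsum_pow_le_tsum_pow (ENNReal.ofReal_lt_one.2 hx1) hcount
  rw [ENNReal.tsum_pow_Ici, ← ofReal_fS S ht] at key
  have hlhs : ENNReal.ofReal (δ * Real.exp (-(N : ℝ) * t) / (1 - x))
      = ENNReal.ofReal δ * (ENNReal.ofReal x ^ N * (1 - ENNReal.ofReal x)⁻¹) := by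
    rw [ENNReal.ofReal_div_of_pos (by linarith), ENNReal.ofReal_mul hδ.le,
      Real.exp_neg_natCast_mul, ENNReal.ofReal_pow (Real.exp_nonneg _),
      ENNReal.ofReal_sub 1 (Real.exp_nonneg _), ENNReal.ofReal_one, div_eq_mul_inv, mul_assoc]
  rw [← hlhs] at key
  exact (ENNReal.ofReal_le_ofReal_iff (tsum_nonneg fun _ => (Real.exp_pos _).le)).1 key
end
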